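/- arXiv:1902.00244 — 4 statements merged into one kernel-verified Lean document; each statement's English description precedes it below -/
import Mathlib

section
/- For any functions A_1,...,A_5 from a sample space to {-1,+1} and any probability distribution, the sum of expectations ⟨A_1A_2⟩ + ⟨A_3A_2⟩ + ⟨A_3A_4⟩ + ⟨A_5A_4⟩ + ⟨A_5A_1⟩ ≥ -3. -/
open MeasureTheory

/-- The five edge products of a ±1 labelling of the pentagon multiply to a square, so an even
number of them are `-1`; hence at most four are, and the sum is at least `1 - 4`. -/
lemma neg_three_le_pentagon_sum {a b c d e : ℝ}
    (ha : a = 1 ∨ a = -1) (hb : b = 1 ∨ b = -1) (hc : c = 1 ∨ c = -1)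
    (hd : d = 1 ∨ d = -1) (he : e = 1 ∨ e = -1) :
    -3 ≤ a * b + c * b + c * d + e * d + e * a := by
  rcases ha with rfl | rfl <;> rcases hb with rfl | rfl <;> rcases hc with rfl | rfl <;>
    rcases hd with rfl | rfl <;> rcases he with rfl | rfl <;> norm_num

lemma le_sum_integral_of_le_sum {Ω ι : Type*} [MeasurableSpace Ω] {μ : Measure Ω}
    [IsProbabilityMeasure μ] {s : Finset ι} {f : ι → Ω → ℝ} {c : ℝ}
    (hf : ∀ i ∈ s, Integrable (f i) μ) (hc : ∀ ω, c ≤ ∑ i ∈ s, f i ω) :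
    c ≤ ∑ i ∈ s, ∫ ω, f i ω ∂μ := by
  rw [← integral_finsetSum s hf]
  calc c = ∫ _, c ∂μ := by simp
    _ ≤ ∫ ω, ∑ i ∈ s, f i ω ∂μ := integral_mono (integrable_const c) (integrable_finsetSum s hf) hc

/-- KCBS inequality for noncontextual hidden-variable models: five ±1-valued
observables on a probability space satisfy
⟨A₁A₂⟩ + ⟨A₃A₂⟩ + ⟨A₃A₄⟩ + ⟨A₅A₄⟩ + ⟨A₅A₁⟩ ≥ -3. -/
theorem kcbs_classical_bound {Ω : Type*} [MeasurableSpace Ω]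
    (μ : Measure Ω) [IsProbabilityMeasure μ]
    (A : Fin 5 → Ω → ℝ)
    (hA : ∀ i ω, A i ω = 1 ∨ A i ω = -1)
    (hint : ∀ i j, Integrable (fun ω => A i ω * A j ω) μ) :
    -3 ≤ (∫ ω, A 0 ω * A 1 ω ∂μ) + (∫ ω, A 2 ω * A 1 ω ∂μ)
        + (∫ ω, A 2 ω * A 3 ω ∂μ) + (∫ ω, A 4 ω * A 3 ω ∂μ)
        + (∫ ω, A 4 ω * A 0 ω ∂μ) := by
  let edges : Fin 5 → Fin 5 × Fin 5 := ![(0, 1), (2, 1), (2, 3), (4, 3), (4, 0)]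
  have h := le_sum_integral_of_le_sum (μ := μ) (s := Finset.univ) (c := -3)
    (f := fun k ω => A (edges k).1 ω * A (edges k).2 ω) (fun k _ => hint _ _)
    (fun ω => by
      simpa [Fin.sum_univ_five, edges] using
        neg_three_le_pentagon_sum (hA 0 ω) (hA 1 ω) (hA 2 ω) (hA 3 ω) (hA 4 ω))
  simpa [Fin.sum_univ_five, edges] using h
end

section
/- Let A_1^1, A_1^2, A_2^1, A_2^2, A_3^1, A_3^2, A_4^1, A_4^2, A_5^1, A_5^2 be ±1-valued random variables on a common probability space, where superscripts denote the two players' outputs and players cannot communicate (i.e., each A_i^1 and A_j^2 are arbitrary ±1 random variables, with the local hidden variable structure: A_i^1 = f_i(λ) and A_j^2 = g_j(λ) for functions f_i, g_j and a shared variable λ). Then ⟨A_1^1A_2^2⟩ + ⟨A_3^1A_2^2⟩ + ⟨A_3^1A_4^2⟩ + ⟨A_5^1A_4^2⟩ + ⟨A_5^1A_1^2⟩ - ⟨A_1^1A_1^2⟩ ≥ -4. -/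
open MeasureTheory

/- For ±1 values the product of the six terms of the modified KCBS expression is `-1`, since each
output occurs in exactly two terms and one term carries a minus sign. Hence an odd number of
terms equal `-1`, at most five of them, so the expression is at least `1 - 5 = -4` pointwise in
the hidden variable, and integrating against a probability measure preserves the bound. -/

theorem neg_four_le_modified_kcbs {a₀ a₂ a₄ b₀ b₁ b₃ : ℝ}
    (ha₀ : a₀ = 1 ∨ a₀ = -1) (ha₂ : a₂ = 1 ∨ a₂ = -1) (ha₄ : a₄ = 1 ∨ a₄ = -1)
    (hb₀ : b₀ = 1 ∨ b₀ = -1) (hb₁ : b₁ = 1 ∨ b₁ = -1) (hb₃ : b₃ = 1 ∨ b₃ = -1) :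
    -4 ≤ a₀ * b₁ + a₂ * b₁ + a₂ * b₃ + a₄ * b₃ + a₄ * b₀ - a₀ * b₀ := by
  rcases ha₀ with rfl | rfl <;> rcases ha₂ with rfl | rfl <;> rcases ha₄ with rfl | rfl <;>
    rcases hb₀ with rfl | rfl <;> rcases hb₁ with rfl | rfl <;> rcases hb₃ with rfl | rfl <;>
    norm_num

/-- Modified KCBS inequality as a Bell inequality: in a local hidden-variable
model where the first player's outputs are f i (λ) ∈ {±1} and the second
player's outputs are g j (λ) ∈ {±1}, the modified KCBS expression is ≥ -4. -/
theorem modified_kcbs_bell_bound {Λ : Type*} [MeasurableSpace Λ]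
    (μ : Measure Λ) [IsProbabilityMeasure μ]
    (f g : Fin 5 → Λ → ℝ)
    (hf : ∀ i lam, f i lam = 1 ∨ f i lam = -1)
    (hg : ∀ j lam, g j lam = 1 ∨ g j lam = -1)
    (hint : ∀ i j, Integrable (fun lam => f i lam * g j lam) μ) :
    -4 ≤ (∫ lam, f 0 lam * g 1 lam ∂μ) + (∫ lam, f 2 lam * g 1 lam ∂μ)
        + (∫ lam, f 2 lam * g 3 lam ∂μ) + (∫ lam, f 4 lam * g 3 lam ∂μ)
        + (∫ lam, f 4 lam * g 0 lam ∂μ) - (∫ lam, f 0 lam * g 0 lam ∂μ) := by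
  have hpointwise := fun lam => neg_four_le_modified_kcbs (hf 0 lam) (hf 2 lam) (hf 4 lam)
    (hg 0 lam) (hg 1 lam) (hg 3 lam)
  have hmono := integral_mono (integrable_const (-4 : ℝ)) (by fun_prop) hpointwise
  rwa [integral_const, probReal_univ, one_smul, integral_sub (by fun_prop) (hint 0 0),
    integral_add (by fun_prop) (hint 4 0), integral_add (by fun_prop) (hint 4 3),
    integral_add (by fun_prop) (hint 2 3), integral_add (hint 0 1) (hint 2 1)] at hmono
end

section
/- In a 3-dimensional complex Hilbert space, if |v_1⟩,...,|v_5⟩ are the unit vectors of a regular pentagram (with ⟨v_i|v_{i+1}⟩ = 0, indices mod 5) and |ψ⟩ is the symmetric-axis state with |⟨v_i|ψ⟩|² = cos(π/5)/(1+cos(π/5)) for each i, then for observables A_i = 1 - 2|v_i⟩⟨v_i| the quantum value Σ_{i=1}^{5} ⟨ψ|A_iA_{i+1}|ψ⟩ equals 5 - 4√5 ≈ -3.944, violating the classical bound of -3. -/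
/-!
Orthogonality of `v i` and `v (i + 1)` kills the cross term of `A_i A_{i+1} ψ`, so each
correlation is `1 - 2 p_i - 2 p_{i+1}` with `p_i = ‖⟪v i, ψ⟫‖²`; summing around the cycle
gives `5 - 4 ∑ p_i`. Since `cos (π / 5) = (1 + √5) / 4`, every `p_i` equals `1 / √5`, and
the sum is `5 - 4√5 < -3` because `√5 > 2`.
-/

open scoped ComplexOrder

noncomputable section

/-- Rank-one (outer product) operator |v⟩⟨v| on a complex inner product space. -/
noncomputable def outerProj {E : Type*} [NormedAddCommGroup E] [InnerProductSpace ℂ E]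
    (v : E) : E →ₗ[ℂ] E where
  toFun x := (inner ℂ v x : ℂ) • v
  map_add' x y := by simp [inner_add_right, add_smul]
  map_smul' c x := by simp [inner_smul_right, smul_smul]

/-- KCBS observable A = 1 - 2|v⟩⟨v|. -/
noncomputable def kcbsObs {E : Type*} [NormedAddCommGroup E] [InnerProductSpace ℂ E]
    (v : E) : E →ₗ[ℂ] E :=
  LinearMap.id - (2 : ℂ) • outerProj v

open scoped InnerProductSpace ComplexConjugate

section KCBSObservable

variable {E : Type*} [NormedAddCommGroup E] [InnerProductSpace ℂ E]

theorem kcbsObs_apply (v x : E) : kcbsObs v x = x - (2 * ⟪v, x⟫_ℂ) • v := by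
  simp [kcbsObs, outerProj, smul_smul]

theorem inner_mul_inner_eq_norm_sq (u ψ : E) :
    ⟪ψ, u⟫_ℂ * ⟪u, ψ⟫_ℂ = (‖⟪u, ψ⟫_ℂ‖ ^ 2 : ℝ) := by
  rw [← inner_conj_symm, Complex.conj_mul', Complex.ofReal_pow]

theorem inner_kcbsObs_kcbsObs_of_inner_eq_zero {u w : E} (h : ⟪u, w⟫_ℂ = 0) (ψ : E) :
    ⟪ψ, kcbsObs u (kcbsObs w ψ)⟫_ℂ
      = ⟪ψ, ψ⟫_ℂ - 2 * (‖⟪u, ψ⟫_ℂ‖ ^ 2 : ℝ) - 2 * (‖⟪w, ψ⟫_ℂ‖ ^ 2 : ℝ) := by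
  rw [kcbsObs_apply, kcbsObs_apply, ← inner_mul_inner_eq_norm_sq u,
    ← inner_mul_inner_eq_norm_sq w]
  simp only [inner_sub_right, inner_smul_right, h]
  ring

theorem sum_inner_kcbsObs_cycle {n : ℕ} [NeZero n] (v : Fin n → E) (ψ : E)
    (horth : ∀ i, ⟪v i, v (i + 1)⟫_ℂ = 0) :
    ∑ i, ⟪ψ, kcbsObs (v i) (kcbsObs (v (i + 1)) ψ)⟫_ℂ
      = n * ⟪ψ, ψ⟫_ℂ - 4 * ∑ i, ((‖⟪v i, ψ⟫_ℂ‖ ^ 2 : ℝ) : ℂ) := by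
  have hshift :
      ∑ i, ((‖⟪v (i + 1), ψ⟫_ℂ‖ ^ 2 : ℝ) : ℂ) = ∑ i, ((‖⟪v i, ψ⟫_ℂ‖ ^ 2 : ℝ) : ℂ) :=
    Equiv.sum_comp (Equiv.addRight 1) (fun i => ((‖⟪v i, ψ⟫_ℂ‖ ^ 2 : ℝ) : ℂ))
  simp only [inner_kcbsObs_kcbsObs_of_inner_eq_zero (horth _), Finset.sum_sub_distrib,
    ← Finset.mul_sum, hshift, Finset.sum_const, Finset.card_univ, Fintype.card_fin, nsmul_eq_mul]
  ring

end KCBSObservable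

theorem Real.cos_pi_div_five_div_one_add_cos :
    Real.cos (Real.pi / 5) / (1 + Real.cos (Real.pi / 5)) = √5 / 5 := by
  have hsq : √5 ^ 2 = 5 := Real.sq_sqrt (by norm_num)
  rw [Real.cos_pi_div_five, div_eq_div_iff (by positivity) (by norm_num)]
  linear_combination (-1 / 4 : ℝ) * hsq

theorem kcbs_quantum_value_general
    (v : Fin 5 → EuclideanSpace ℂ (Fin 3)) (ψ : EuclideanSpace ℂ (Fin 3))
    (hψ : ‖ψ‖ = 1)
    (horth : ∀ i : Fin 5, (inner ℂ (v i) (v (i + 1)) : ℂ) = 0)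
    (hp : ∀ i : Fin 5, ‖(inner ℂ (v i) ψ : ℂ)‖ ^ 2
        = Real.cos (Real.pi / 5) / (1 + Real.cos (Real.pi / 5))) :
    (∑ i : Fin 5, (inner ℂ ψ ((kcbsObs (v i)) ((kcbsObs (v (i + 1))) ψ)) : ℂ))
      = ((5 - 4 * Real.sqrt 5 : ℝ) : ℂ)
    ∧ (5 - 4 * Real.sqrt 5 : ℝ) < -3 := by
  have hψψ : ⟪ψ, ψ⟫_ℂ = 1 := by rw [inner_self_eq_norm_sq_to_K, hψ]; norm_num
  have hp' : ∀ i, ‖⟪v i, ψ⟫_ℂ‖ ^ 2 = √5 / 5 := fun i =>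
    (hp i).trans Real.cos_pi_div_five_div_one_add_cos
  refine ⟨?_, ?_⟩
  · rw [sum_inner_kcbsObs_cycle v ψ horth, hψψ]
    simp only [hp', Finset.sum_const, Finset.card_univ, Fintype.card_fin, nsmul_eq_mul]
    push_cast
    ring
  · have : 2 < √5 := Real.lt_sqrt (by norm_num) |>.mpr (by norm_num)
    linarith

/-- Quantum value of the KCBS pentagram configuration in dimension 3:
with unit vectors v i, ⟨v i , v (i+1)⟩ = 0, and a state ψ with
|⟨v i, ψ⟩|² = cos(π/5)/(1+cos(π/5)) for each i, the sum of the five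
correlations ⟨ψ| A_i A_{i+1} |ψ⟩ equals 5 - 4√5 < -3. -/
theorem kcbs_quantum_value
    (v : Fin 5 → EuclideanSpace ℂ (Fin 3)) (ψ : EuclideanSpace ℂ (Fin 3))
    (hv : ∀ i, ‖v i‖ = 1) (hψ : ‖ψ‖ = 1)
    (horth : ∀ i : Fin 5, (inner ℂ (v i) (v (i + 1)) : ℂ) = 0)
    (hp : ∀ i : Fin 5, ‖(inner ℂ (v i) ψ : ℂ)‖ ^ 2
        = Real.cos (Real.pi / 5) / (1 + Real.cos (Real.pi / 5))) :
    (∑ i : Fin 5, (inner ℂ ψ ((kcbsObs (v i)) ((kcbsObs (v (i + 1))) ψ)) : ℂ))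
      = ((5 - 4 * Real.sqrt 5 : ℝ) : ℂ)
    ∧ (5 - 4 * Real.sqrt 5 : ℝ) < -3 :=
  kcbs_quantum_value_general v ψ hψ horth hp
end
end

section
/- For any discrete probability distribution p over the 11 inputs of the KCBS game and ±1-valued deterministic assignments, the maximal score of the KCBS game g = -(1/6)(a_1a_2 + a_3a_2 + a_3a_4 + a_5a_4 + a_5a_1 - a_1a_1') achievable by deterministic strategies with consistent values (a_1' = a_1, all a_i ∈ {-1,+1}) is exactly 2/3, while the quantum value (4√5 - 4)/6 ≈ 0.824 strictly exceeds it. -/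
/-! A deterministic strategy assigns signs to the five vertices of a pentagon, and the score
only involves the five edge products `a i * a (i + 1)`. Their product is `(∏ a i)² = 1`, so an
even number of them equal `-1`; on an odd cycle at least one edge is therefore satisfied, the
correlation sum is at least `-3`, and the score is at most `-(1/6)(-3 - 1) = 2/3`, attained by the
alternating assignment. The quantum value beats this because `√5 > 2`. -/

open Finset

theorem prod_mul_comp_perm_eq_one {ι M : Type*} [Fintype ι] [CommMonoid M] (σ : Equiv.Perm ι)
    {a : ι → M} (ha : ∀ i, a i * a i = 1) : ∏ i, a i * a (σ i) = 1 := by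
  rw [prod_mul_distrib, Equiv.prod_comp, ← prod_mul_distrib]
  exact prod_eq_one fun i _ => ha i

theorem two_sub_card_le_sum_of_prod_eq_one {ι R : Type*} [Fintype ι] [CommRing R] [LinearOrder R]
    [IsStrictOrderedRing R] (hι : Odd (Fintype.card ι)) {b : ι → R}
    (hb : ∀ i, b i = 1 ∨ b i = -1) (hprod : ∏ i, b i = 1) :
    2 - (Fintype.card ι : R) ≤ ∑ i, b i := by
  obtain ⟨j, hj⟩ : ∃ j, b j = 1 := by
    by_contra! hne
    have hneg : ∀ i, b i = -1 := fun i => (hb i).resolve_left (hne i)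
    rw [prod_congr rfl fun i _ => hneg i, prod_const, card_univ, hι.neg_one_pow] at hprod
    linarith
  have hshift : b j + 1 ≤ ∑ i, (b i + 1) := by
    refine single_le_sum (f := fun i => b i + 1) (fun i _ => ?_) (mem_univ j)
    rcases hb i with h | h <;> simp [h]
  rw [sum_add_distrib, sum_const, card_univ, nsmul_one] at hshift
  linarith

theorem two_sub_card_le_sum_mul_comp_perm {ι R : Type*} [Fintype ι] [CommRing R] [LinearOrder R]
    [IsStrictOrderedRing R] (hι : Odd (Fintype.card ι)) (σ : Equiv.Perm ι) {a : ι → R}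
    (ha : ∀ i, a i = 1 ∨ a i = -1) :
    2 - (Fintype.card ι : R) ≤ ∑ i, a i * a (σ i) := by
  have hsq : ∀ i, a i * a i = 1 := fun i => mul_self_eq_one_iff.2 (ha i)
  refine two_sub_card_le_sum_of_prod_eq_one hι (fun i => mul_self_eq_one_iff.1 ?_)
    (prod_mul_comp_perm_eq_one σ hsq)
  rw [mul_mul_mul_comm, hsq, hsq, one_mul]

theorem two_lt_sqrt_five : (2 : ℝ) < Real.sqrt 5 :=
  (Real.lt_sqrt zero_le_two).2 (by norm_num)

/-- The maximal KCBS game score achievable by deterministic ±1 strategies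
(with consistent value for the repeated observable A₁) is exactly 2/3, and the
quantum value (4√5 - 4)/6 strictly exceeds it. -/
theorem kcbs_game_classical_value :
    IsGreatest {g : ℝ | ∃ a : Fin 5 → ℝ, (∀ i, a i = 1 ∨ a i = -1) ∧
        g = -(1 / 6) * (a 0 * a 1 + a 2 * a 1 + a 2 * a 3 + a 4 * a 3
          + a 4 * a 0 - a 0 * a 0)} (2 / 3)
    ∧ (2 / 3 : ℝ) < (4 * Real.sqrt 5 - 4) / 6 := by
  refine ⟨⟨⟨![1, -1, 1, -1, 1], fun i => ?_, ?_⟩, ?_⟩, by linarith [two_lt_sqrt_five]⟩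
  · fin_cases i <;> simp
  · norm_num [Matrix.cons_val_two, Matrix.cons_val_three, Matrix.cons_val_four]
  · rintro g ⟨a, ha, rfl⟩
    have hcycle := two_sub_card_le_sum_mul_comp_perm (by decide) (finRotate 5) ha
    simp only [Fintype.card_fin, Nat.cast_ofNat, Fin.sum_univ_five, finRotate_apply,
      Fin.reduceAdd] at hcycle
    linarith [mul_self_eq_one_iff.2 (ha 0)]
end
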